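/- arXiv:2403.12923 — 11 statements merged into one kernel-verified Lean document; each statement's English description precedes it below -/
import Mathlib

section
/- For the knapsack pricing problem, the leader may be assumed to set t i ≤ v i on tolled items: if w i ≥ 0 for all i, C ≥ 0, and v i ≥ 0 for all i ∈ I₁, then the optimistic CPP value sup over feasible tolls t and S ∈ R(t) of Σ_{i∈S} t i equals the supremum of the same quantity taken only over feasible tolls t that additionally satisfy t i ≤ v i for all i ∈ I₁. -/
open Finset

/-- In the knapsack pricing problem (nonnegative weights, nonnegative
capacity, nonnegative base values on tolled items), the optimistic CPP value is unchanged
if the leader is additionally restricted to tolls satisfying `t i ≤ v i` on tolled items. -/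
theorem kpp_toll_bounded_by_value {ι : Type*} [Fintype ι] [DecidableEq ι]
    (I₁ I₂ : Finset ι) (hpart : I₁ ∪ I₂ = Finset.univ) (hdisj : Disjoint I₁ I₂)
    (v w : ι → ℝ) (C : ℝ) (hw : ∀ i, 0 ≤ w i) (hC : 0 ≤ C)
    (hv : ∀ i ∈ I₁, 0 ≤ v i) :
    sSup {r : ℝ | ∃ t : ι → ℝ, (∀ i ∈ I₁, 0 ≤ t i) ∧ (∀ i ∈ I₂, t i = 0) ∧
      ∃ S : Finset ι, (∑ i ∈ S, w i ≤ C) ∧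
        (∀ S' : Finset ι, (∑ i ∈ S', w i ≤ C) →
          ∑ i ∈ S', (v i - t i) ≤ ∑ i ∈ S, (v i - t i)) ∧
        r = ∑ i ∈ S, t i} =
    sSup {r : ℝ | ∃ t : ι → ℝ, (∀ i ∈ I₁, 0 ≤ t i) ∧ (∀ i ∈ I₂, t i = 0) ∧
      (∀ i ∈ I₁, t i ≤ v i) ∧
      ∃ S : Finset ι, (∑ i ∈ S, w i ≤ C) ∧
        (∀ S' : Finset ι, (∑ i ∈ S', w i ≤ C) →
          ∑ i ∈ S', (v i - t i) ≤ ∑ i ∈ S, (v i - t i)) ∧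
        r = ∑ i ∈ S, t i} := by
  classical
  congr 1
  ext r
  constructor
  · rintro ⟨t, ht1, ht2, S, hSw, hSopt, rfl⟩
    -- In an optimal response S, tolls never exceed values.
    have key : ∀ i ∈ S, i ∈ I₁ → t i ≤ v i := by
      intro i hiS hiI
      have hfeas : ∑ j ∈ S.erase i, w j ≤ C :=
        le_trans (Finset.sum_le_sum_of_subset_of_nonneg (Finset.erase_subset i S)
          (fun j _ _ => hw j)) hSw
      have hopt := hSopt (S.erase i) hfeas
      have hsum : ∑ j ∈ S.erase i, (v j - t j) + (v i - t i) = ∑ j ∈ S, (v j - t j) :=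
        Finset.sum_erase_add S _ hiS
      linarith
    set t' : ι → ℝ := fun i => if i ∈ I₁ then min (t i) (v i) else t i with ht'
    have hSeq : ∀ T : Finset ι, (∀ j ∈ T, j ∈ I₁ → t j ≤ v j) →
        ∑ j ∈ T, (v j - t' j) = ∑ j ∈ T, (v j - t j) := by
      intro T hT
      refine Finset.sum_congr rfl fun j hj => ?_
      by_cases hjI : j ∈ I₁
      · simp [ht', hjI, min_eq_left (hT j hj hjI)]
      · simp [ht', hjI]
    have hSsum : ∑ j ∈ S, t' j = ∑ j ∈ S, t j := by
      refine Finset.sum_congr rfl fun j hj => ?_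
      by_cases hjI : j ∈ I₁
      · simp [ht', hjI, min_eq_left (key j hj hjI)]
      · simp [ht', hjI]
    refine ⟨t', ?_, ?_, ?_, S, hSw, ?_, hSsum.symm⟩
    · intro i hi; simp only [ht', if_pos hi]; exact le_min (ht1 i hi) (hv i hi)
    · intro i hi
      have hni : i ∉ I₁ := fun h => (Finset.disjoint_left.mp hdisj h) hi
      simp [ht', hni, ht2 i hi]
    · intro i hi; simp only [ht', if_pos hi]; exact min_le_right _ _
    · intro S' hS'
      rw [hSeq S key]
      set p : ι → Prop := fun i => i ∉ I₁ ∨ t i ≤ v i with hp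
      set S'' := S'.filter p with hS''def
      have hS''feas : ∑ j ∈ S'', w j ≤ C :=
        le_trans (Finset.sum_le_sum_of_subset_of_nonneg (Finset.filter_subset _ _)
          (fun j _ _ => hw j)) hS'
      have e1 : ∑ j ∈ S'', (v j - t' j) = ∑ j ∈ S'', (v j - t j) := by
        refine hSeq S'' fun j hj hjI => ?_
        rcases (Finset.mem_filter.mp hj).2 with h | h
        · exact absurd hjI h
        · exact h
      have e2 : ∑ j ∈ S'.filter (fun i => ¬ p i), (v j - t' j) = 0 := by
        refine Finset.sum_eq_zero fun j hj => ?_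
        have hj' : ¬ (j ∉ I₁ ∨ t j ≤ v j) := (Finset.mem_filter.mp hj).2
        push_neg at hj'
        obtain ⟨hjI, hjv⟩ := hj'
        simp [ht', hjI, min_eq_right hjv.le]
      have hsplit : ∑ j ∈ S', (v j - t' j) =
          ∑ j ∈ S'', (v j - t' j) + ∑ j ∈ S'.filter (fun i => ¬ p i), (v j - t' j) :=
        (Finset.sum_filter_add_sum_filter_not S' p _).symm
      rw [hsplit, e1, e2, add_zero]
      exact hSopt S'' hS''feas
  · rintro ⟨t, ht1, ht2, _, S, hSw, hSopt, rfl⟩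
    exact ⟨t, ht1, ht2, S, hSw, hSopt, rfl⟩
end

section
/- In the knapsack pricing problem with w i ≥ 0 for all i, C ≥ 0, and a feasible toll t satisfying 0 ≤ t i ≤ v i for all i ∈ ι, there exists S* ∈ R(t) that is maximal in 𝒳 (i.e., every S' ∈ 𝒳 with S* ⊆ S' equals S*) and that attains the optimistic revenue, i.e., Σ_{i∈S*} t i ≥ Σ_{i∈S} t i for every S ∈ R(t). -/
open Finset

/-- In the knapsack pricing problem with nonnegative weights and capacity
and a feasible toll `t` with `0 ≤ t i ≤ v i` for all items, there is a follower-optimal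
solution `S*` that is maximal among knapsack-feasible sets and attains the optimistic
revenue among all follower-optimal solutions. -/
theorem kpp_exists_maximal_optimistic_response {ι : Type*} [Fintype ι] [DecidableEq ι]
    (I₁ I₂ : Finset ι) (hpart : I₁ ∪ I₂ = Finset.univ) (hdisj : Disjoint I₁ I₂)
    (v w : ι → ℝ) (C : ℝ) (hw : ∀ i, 0 ≤ w i) (hC : 0 ≤ C)
    (t : ι → ℝ) (htfeas₁ : ∀ i ∈ I₁, 0 ≤ t i) (htfeas₂ : ∀ i ∈ I₂, t i = 0)
    (ht : ∀ i, 0 ≤ t i ∧ t i ≤ v i) :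
    ∃ Sstar : Finset ι, (∑ i ∈ Sstar, w i ≤ C) ∧
      (∀ S' : Finset ι, (∑ i ∈ S', w i ≤ C) →
        ∑ i ∈ S', (v i - t i) ≤ ∑ i ∈ Sstar, (v i - t i)) ∧
      (∀ S' : Finset ι, (∑ i ∈ S', w i ≤ C) → Sstar ⊆ S' → S' = Sstar) ∧
      (∀ S : Finset ι, (∑ i ∈ S, w i ≤ C) →
        (∀ S' : Finset ι, (∑ i ∈ S', w i ≤ C) →
          ∑ i ∈ S', (v i - t i) ≤ ∑ i ∈ S, (v i - t i)) →
        ∑ i ∈ S, t i ≤ ∑ i ∈ Sstar, t i) := by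
  classical
  set g₁ : Finset ι → ℝ := fun S => ∑ i ∈ S, (v i - t i) with hg₁
  set g₂ : Finset ι → ℝ := fun S => ∑ i ∈ S, t i with hg₂
  set 𝒳 : Finset (Finset ι) :=
    Finset.univ.filter (fun S => ∑ i ∈ S, w i ≤ C) with h𝒳
  have hmem : ∀ S : Finset ι, S ∈ 𝒳 ↔ ∑ i ∈ S, w i ≤ C := by
    intro S; simp [h𝒳]
  have hne : 𝒳.Nonempty := ⟨∅, by simpa [hmem] using hC⟩
  -- step 1 : maximize g₁
  obtain ⟨S₁, hS₁mem, hS₁max⟩ := 𝒳.exists_max_image g₁ hne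
  set 𝒳₂ := 𝒳.filter (fun S => g₁ S₁ ≤ g₁ S) with h𝒳₂
  have hne₂ : 𝒳₂.Nonempty := ⟨S₁, by simp [h𝒳₂, hS₁mem]⟩
  obtain ⟨S₂, hS₂mem, hS₂max⟩ := 𝒳₂.exists_max_image g₂ hne₂
  set 𝒳₃ := 𝒳₂.filter (fun S => g₂ S₂ ≤ g₂ S) with h𝒳₃
  have hne₃ : 𝒳₃.Nonempty := ⟨S₂, by simp [h𝒳₃, hS₂mem]⟩
  obtain ⟨S₃, hS₃mem, hS₃max⟩ := 𝒳₃.exists_max_image (fun S => (S.card : ℕ)) hne₃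
  simp only [h𝒳₃, Finset.mem_filter] at hS₃mem
  obtain ⟨hS₃mem₂, hS₃g₂⟩ := hS₃mem
  simp only [h𝒳₂, Finset.mem_filter] at hS₃mem₂
  obtain ⟨hS₃𝒳, hS₃g₁⟩ := hS₃mem₂
  have hS₃feas : ∑ i ∈ S₃, w i ≤ C := (hmem S₃).1 hS₃𝒳
  -- S₃ maximizes g₁ over 𝒳
  have hg₁max : ∀ S' : Finset ι, (∑ i ∈ S', w i ≤ C) → g₁ S' ≤ g₁ S₃ := by
    intro S' h'
    exact le_trans (hS₁max S' ((hmem S').2 h')) hS₃g₁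
  refine ⟨S₃, hS₃feas, hg₁max, ?_, ?_⟩
  · -- maximality
    intro S' hfeas' hsub
    have hg₁mono : g₁ S₃ ≤ g₁ S' := by
      apply Finset.sum_le_sum_of_subset_of_nonneg hsub
      intro i _ _
      have := ht i
      linarith [this.1, this.2]
    have hS'₂ : S' ∈ 𝒳₂ := by
      simp only [h𝒳₂, Finset.mem_filter]
      exact ⟨(hmem S').2 hfeas', le_trans (le_trans hS₃g₁ hg₁mono) (le_refl _)⟩
    have hg₂mono : g₂ S₃ ≤ g₂ S' := by
      apply Finset.sum_le_sum_of_subset_of_nonneg hsub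
      intro i _ _
      exact (ht i).1
    have hS'₃ : S' ∈ 𝒳₃ := by
      simp only [h𝒳₃, Finset.mem_filter]
      exact ⟨hS'₂, le_trans hS₃g₂ hg₂mono⟩
    have hcard : S'.card ≤ S₃.card := hS₃max S' hS'₃
    exact (Finset.eq_of_subset_of_card_le hsub hcard).symm
  · -- optimistic revenue
    intro S hSfeas hSopt
    have hSopt' : g₁ S₁ ≤ g₁ S := by
      exact le_trans hS₃g₁ (hSopt S₃ hS₃feas)
    have hS₂' : S ∈ 𝒳₂ := by
      simp only [h𝒳₂, Finset.mem_filter]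
      exact ⟨(hmem S).2 hSfeas, hSopt'⟩
    exact le_trans (hS₂max S hS₂') hS₃g₂
end

section
/- Strong duality for the longest-path dual: let V be a finite type with distinguished vertices p and q, A a finite type of arcs with source and target maps u, w : A → V, and F : A → ℝ arc lengths. Assume the multigraph is acyclic (there is no nonempty list of arcs a₁, …, aₘ with w aₖ = u aₖ₊₁ for 1 ≤ k < m and w aₘ = u a₁), that every vertex admits an arc path to q (the empty path being allowed for q itself), and that there exists at least one p–q path. Then there exists y : V → ℝ with y q = 0 and y (u a) ≥ F a + y (w a) for every a ∈ A, such that y p equals the maximum of Σ_{k} F aₖ over all p–q paths. -/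
/-!
The potential is `y x` = the longest `x`–`q` path length. Acyclicity makes the arcs of a path
pairwise distinct, so there are finitely many paths and the maximum exists; there is no
`q`–`q` path, so `y q = 0`; and prepending an arc `a` to a longest `w a`–`q` path gives a
`u a`–`q` path, which is the dual constraint `y (u a) ≥ F a + y (w a)`.
-/

/-- A `p`–`q` path in a directed multigraph with arcs `A`, source map `u` and target
map `w`: a nonempty list of arcs with matching consecutive endpoints, starting at `p`
and ending at `q`. -/
def IsArcPath {V A : Type*} (u w : A → V) (p q : V) (l : List A) : Prop :=
  ∃ h : l ≠ [], l.Chain' (fun a b => w a = u b) ∧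
    u (l.head h) = p ∧ w (l.getLast h) = q

section LongestPath

variable {V A : Type*} (u w : A → V)

def HasArcCycle : Prop :=
  ∃ l : List A, ∃ h : l ≠ [], l.IsChain (fun a b => w a = u b) ∧ w (l.getLast h) = u (l.head h)

variable {u w}

/-- Between two occurrences of an arc, a chain of arcs runs along a cycle. -/
theorem List.IsChain.nodup_of_not_hasArcCycle (hacyc : ¬ HasArcCycle u w) :
    ∀ {l : List A}, l.IsChain (fun a b => w a = u b) → l.Nodup
  | [], _ => List.nodup_nil
  | a :: l, hchain => by
    refine List.nodup_cons.2 ⟨fun ha => ?_, hchain.tail.nodup_of_not_hasArcCycle hacyc⟩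
    obtain ⟨s, t, rfl⟩ := List.append_of_mem ha
    have hloop : (a :: s ++ [a]).IsChain (fun a b => w a = u b) := by
      rw [show a :: (s ++ a :: t) = a :: s ++ [a] ++ t by simp] at hchain
      exact hchain.left_of_append
    exact hacyc ⟨a :: s, List.cons_ne_nil a s, hloop.left_of_append,
      hloop.rel_getLast_head_of_append (List.cons_ne_nil a s) (List.cons_ne_nil a [])⟩

theorem IsArcPath.nodup (hacyc : ¬ HasArcCycle u w) {x z : V} {l : List A}
    (hl : IsArcPath u w x z l) : l.Nodup :=
  hl.2.1.nodup_of_not_hasArcCycle hacyc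

theorem IsArcPath.not_self (hacyc : ¬ HasArcCycle u w) (x : V) (l : List A) :
    ¬ IsArcPath u w x x l := by
  rintro ⟨hne, hchain, hhead, hlast⟩
  exact hacyc ⟨l, hne, hchain, hlast.trans hhead.symm⟩

theorem isArcPath_singleton (a : A) : IsArcPath u w (u a) (w a) [a] :=
  ⟨List.cons_ne_nil a [], List.isChain_singleton a, rfl, rfl⟩

theorem IsArcPath.cons {z : V} {l : List A} (a : A) (hl : IsArcPath u w (w a) z l) :
    IsArcPath u w (u a) z (a :: l) := by
  obtain ⟨hne, hchain, hhead, hlast⟩ := hl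
  exact ⟨List.cons_ne_nil a l, hchain.cons_of_ne_nil hne hhead.symm, rfl,
    (congrArg w (List.getLast_cons hne)).trans hlast⟩

variable (u w) (F : A → ℝ)

def pathLengths (x z : V) : Set ℝ :=
  {r : ℝ | ∃ l : List A, IsArcPath u w x z l ∧ r = (l.map F).sum}

/-- The longest `x`–`z` path length; by `Real.sSup_empty` it is `0` when there is no such path,
which is the right value at `x = z` in an acyclic graph. -/
noncomputable def longestPathLength (x z : V) : ℝ :=
  sSup (pathLengths u w F x z)

variable {u w F}

theorem longestPathLength_self (hacyc : ¬ HasArcCycle u w) (x : V) :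
    longestPathLength u w F x x = 0 := by
  have hempty : pathLengths u w F x x = ∅ :=
    Set.eq_empty_of_forall_notMem fun _ ⟨l, hl, _⟩ => hl.not_self hacyc x l
  rw [longestPathLength, hempty, Real.sSup_empty]

variable [Fintype A]

theorem pathLengths_finite (hacyc : ¬ HasArcCycle u w) (x z : V) :
    (pathLengths u w F x z).Finite := by
  have hnodup : {l : List A | l.Nodup}.Finite :=
    (List.finite_length_le A (Fintype.card A)).subset fun _ hl => hl.length_le_card
  refine (hnodup.image fun l => (l.map F).sum).subset ?_
  rintro _ ⟨l, hl, rfl⟩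
  exact ⟨l, hl.nodup hacyc, rfl⟩

theorem le_longestPathLength (hacyc : ¬ HasArcCycle u w) {x z : V} {l : List A}
    (hl : IsArcPath u w x z l) : (l.map F).sum ≤ longestPathLength u w F x z :=
  le_csSup (pathLengths_finite hacyc x z).bddAbove ⟨l, hl, rfl⟩

theorem isGreatest_longestPathLength (hacyc : ¬ HasArcCycle u w) {x z : V}
    (hxz : ∃ l, IsArcPath u w x z l) :
    IsGreatest (pathLengths u w F x z) (longestPathLength u w F x z) := by
  obtain ⟨l, hl⟩ := hxz
  exact ⟨Set.Nonempty.csSup_mem ⟨_, l, hl, rfl⟩ (pathLengths_finite hacyc x z),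
    fun _ ⟨_, hl', hr⟩ => hr ▸ le_longestPathLength hacyc hl'⟩

theorem add_longestPathLength_le (hacyc : ¬ HasArcCycle u w) {z : V} (a : A)
    (hreach : w a = z ∨ ∃ l, IsArcPath u w (w a) z l) :
    F a + longestPathLength u w F (w a) z ≤ longestPathLength u w F (u a) z := by
  rcases hreach with hz | hpath
  · subst hz
    simpa [longestPathLength_self hacyc] using le_longestPathLength (F := F) hacyc
      (isArcPath_singleton a)
  · obtain ⟨⟨l, hl, hlen⟩, -⟩ := isGreatest_longestPathLength (F := F) hacyc hpath
    simpa [hlen] using le_longestPathLength (F := F) hacyc (hl.cons a)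

end LongestPath

theorem longest_path_strong_duality_general {V A : Type*} [Fintype A]
    (p q : V) (u w : A → V) (F : A → ℝ)
    (hacyc : ¬ ∃ l : List A, ∃ h : l ≠ [],
      l.Chain' (fun a b => w a = u b) ∧ w (l.getLast h) = u (l.head h))
    (hreach : ∀ x : V, x = q ∨ ∃ l : List A, IsArcPath u w x q l)
    (hpq : ∃ l : List A, IsArcPath u w p q l) :
    ∃ y : V → ℝ, y q = 0 ∧ (∀ a : A, y (u a) ≥ F a + y (w a)) ∧
      IsGreatest {r : ℝ | ∃ l : List A, IsArcPath u w p q l ∧ r = (l.map F).sum}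
        (y p) :=
  ⟨fun x => longestPathLength u w F x q, longestPathLength_self hacyc q,
    fun a => add_longestPathLength_le hacyc a (hreach (w a)),
    isGreatest_longestPathLength hacyc hpq⟩

/-- Strong duality for the longest-path dual: in an acyclic finite
multigraph where every vertex admits a path to `q` and some `p`–`q` path exists, there
is a dual-feasible potential `y` such that `y p` equals the maximum `p`–`q` path length. -/
theorem longest_path_strong_duality {V A : Type*} [Fintype V] [Fintype A]
    (p q : V) (u w : A → V) (F : A → ℝ)
    (hacyc : ¬ ∃ l : List A, ∃ h : l ≠ [],
      l.Chain' (fun a b => w a = u b) ∧ w (l.getLast h) = u (l.head h))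
    (hreach : ∀ x : V, x = q ∨ ∃ l : List A, IsArcPath u w x q l)
    (hpq : ∃ l : List A, IsArcPath u w p q l) :
    ∃ y : V → ℝ, y q = 0 ∧ (∀ a : A, y (u a) ≥ F a + y (w a)) ∧
      IsGreatest {r : ℝ | ∃ l : List A, IsArcPath u w p q l ∧ r = (l.map F).sum}
        (y p) :=
  longest_path_strong_duality_general p q u w F hacyc hreach hpq
end

section
/- Correctness of the stable set decision diagram: let G be a simple graph on Fin n and x : Fin n → Bool. Define states s : ℕ → Finset (Fin n) by s 0 = Finset.univ and, for k < n, s (k+1) = s k \ N[k] if x k = true and s (k+1) = s k \ {k} if x k = false, where N[k] denotes the closed neighborhood of vertex k in G (vertex k together with all vertices adjacent to it). Then the set { k : x k = true } is a stable (independent) set of G if and only if for every k < n with x k = true one has k ∈ s k. -/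
/-!
By induction on `m`, a vertex `v` lies in `s m` exactly when no vertex `j < m` equals `v` and no
included vertex `j < m` is adjacent to `v`. So `k ∈ s k` says that no earlier included vertex is
adjacent to `k`, and by symmetry and irreflexivity of adjacency this is stability.
-/

theorem SimpleGraph.forall_not_adj_iff_forall_lt {V : Type*} [LinearOrder V]
    (G : SimpleGraph V) (P : V → Prop) :
    (∀ j k, P j → P k → ¬ G.Adj j k) ↔ ∀ j k, j < k → P j → P k → ¬ G.Adj j k := by
  refine ⟨fun h j k _ => h j k, fun h j k hj hk hadj => ?_⟩
  rcases lt_trichotomy j k with hjk | rfl | hkj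
  · exact h j k hjk hj hk hadj
  · exact G.loopless.irrefl j hadj
  · exact h k j hkj hk hj hadj.symm

section DecisionDiagram

variable {n : ℕ} {G : SimpleGraph (Fin n)} [DecidableRel G.Adj] {x : Fin n → Bool}
  {s : ℕ → Finset (Fin n)}

theorem mem_succ_state_iff
    (hs : ∀ k : Fin n, s ((k : ℕ) + 1) =
      if x k = true then s (k : ℕ) \ insert k (G.neighborFinset k)
      else s (k : ℕ) \ {k}) (k v : Fin n) :
    v ∈ s (k + 1) ↔ v ∈ s k ∧ v ≠ k ∧ (x k = true → ¬ G.Adj k v) := by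
  rw [hs k]
  cases x k <;> simp

theorem mem_state_iff (h0 : s 0 = Finset.univ)
    (hs : ∀ k : Fin n, s ((k : ℕ) + 1) =
      if x k = true then s (k : ℕ) \ insert k (G.neighborFinset k)
      else s (k : ℕ) \ {k}) {m : ℕ} (hm : m ≤ n) (v : Fin n) :
    v ∈ s m ↔ ∀ j : Fin n, (j : ℕ) < m → v ≠ j ∧ (x j = true → ¬ G.Adj j v) := by
  induction m with
  | zero => simp [h0]
  | succ m ih =>
    have hlt (j : Fin n) : (j : ℕ) < m + 1 ↔ (j : ℕ) < m ∨ j = ⟨m, hm⟩ := by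
      rw [Nat.lt_succ_iff_lt_or_eq, Fin.ext_iff]
    rw [mem_succ_state_iff hs ⟨m, hm⟩ v, ih (by omega)]
    simp only [hlt, or_imp, forall_and, forall_eq]
    exact and_and_and_comm

theorem self_mem_state_iff (h0 : s 0 = Finset.univ)
    (hs : ∀ k : Fin n, s ((k : ℕ) + 1) =
      if x k = true then s (k : ℕ) \ insert k (G.neighborFinset k)
      else s (k : ℕ) \ {k}) (k : Fin n) :
    k ∈ s k ↔ ∀ j : Fin n, j < k → x j = true → ¬ G.Adj j k := by
  rw [mem_state_iff h0 hs k.isLt.le k]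
  exact forall₂_congr fun j hjk => and_iff_right (Fin.ne_of_gt hjk)

end DecisionDiagram

/-- Correctness of the stable set decision diagram: with states given by
the sets of still-available vertices (`s 0 = univ`; including vertex `k` removes its
closed neighborhood, excluding it removes only `k`), the selected vertices form a stable
(independent) set of `G` iff every included vertex is still available at its step. -/
theorem stable_set_decision_diagram_correct (n : ℕ) (G : SimpleGraph (Fin n))
    [DecidableRel G.Adj] (x : Fin n → Bool)
    (s : ℕ → Finset (Fin n)) (h0 : s 0 = Finset.univ)
    (hs : ∀ k : Fin n, s ((k : ℕ) + 1) =
      if x k = true then s (k : ℕ) \ insert k (G.neighborFinset k)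
      else s (k : ℕ) \ {k}) :
    (∀ j k : Fin n, x j = true → x k = true → ¬ G.Adj j k) ↔
      (∀ k : Fin n, x k = true → k ∈ s (k : ℕ)) := by
  rw [G.forall_not_adj_iff_forall_lt]
  simp only [self_mem_state_iff h0 hs]
  exact ⟨fun h k hk j hjk hj => h j k hjk hj hk, fun h j k hjk hj hk => h k hk j hjk hj⟩
end

section
/- Soundness of valid transitions in the stable set decision diagram: let G be a simple graph on a finite vertex type V, m : ℕ, s : Fin (m+1) → Finset V, and I₁, …, Iₘ finsets of vertices such that for every 1 ≤ r ≤ m: I_r is a stable set of G, I_r ⊆ s (r−1), and s r ⊆ s (r−1) \ N[I_r], where N[I_r] is the union of the closed neighborhoods of the vertices in I_r. Then I₁ ∪ ⋯ ∪ Iₘ is a stable set of G. -/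
open Finset

/-- Soundness of valid transitions in the stable set decision diagram:
if each transition carries a stable set `I r` contained in the current available set
`s (r-1)` and moves to a state `s r ⊆ s (r-1) \ N[I r]` (closed neighborhoods removed),
then the union of the selected vertex sets is a stable set of `G`. -/
theorem stable_set_valid_transitions_sound {V : Type*} [Fintype V] [DecidableEq V]
    (G : SimpleGraph V) [DecidableRel G.Adj] (m : ℕ)
    (s : Fin (m + 1) → Finset V) (I : Fin m → Finset V)
    (hstable : ∀ r : Fin m, ∀ a ∈ I r, ∀ b ∈ I r, ¬ G.Adj a b)
    (hsub : ∀ r : Fin m, I r ⊆ s r.castSucc)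
    (hvalid : ∀ r : Fin m, s r.succ ⊆
      s r.castSucc \ (I r).biUnion (fun a => insert a (G.neighborFinset a))) :
    ∀ a ∈ Finset.univ.biUnion I, ∀ b ∈ Finset.univ.biUnion I, ¬ G.Adj a b := by
  have step : ∀ k : Fin m, s k.succ ⊆ s k.castSucc := fun k =>
    (hvalid k).trans sdiff_subset
  have mono : ∀ i j : Fin (m + 1), i ≤ j → s j ⊆ s i := by
    intro i j hij
    obtain ⟨d, hd⟩ := Nat.le.dest hij
    clear hij
    induction d generalizing j with
    | zero => have : i = j := Fin.ext hd; subst this; exact subset_rfl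
    | succ d ih =>
        have hdm : i.val + d < m := by omega
        set k : Fin m := ⟨i.val + d, hdm⟩
        have hj : j = k.succ := by
          apply Fin.ext
          simp [k, Fin.val_succ, ← hd]; omega
        have hk : s k.castSucc ⊆ s i := by
          apply ih
          simp [k]
        rw [hj]
        exact (step k).trans hk
  -- key: cross-pair non-adjacency for r < r'
  have key : ∀ r r' : Fin m, r < r' → ∀ a ∈ I r, ∀ b ∈ I r', ¬ G.Adj a b := by
    intro r r' hrr' a ha b hb hab
    have hble : r.succ ≤ r'.castSucc := by
      have := Fin.lt_def.mp hrr'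
      rw [Fin.le_def, Fin.val_succ, Fin.coe_castSucc]; omega
    have hbs : b ∈ s r.succ := mono _ _ hble (hsub r' hb)
    have := hvalid r hbs
    rw [mem_sdiff] at this
    exact this.2 (mem_biUnion.mpr ⟨a, ha, by simp [hab]⟩)
  intro a ha b hb hab
  rw [mem_biUnion] at ha hb
  obtain ⟨r, -, ha⟩ := ha
  obtain ⟨r', -, hb⟩ := hb
  rcases lt_trichotomy r r' with h | h | h
  · exact key r r' h a ha b hb hab
  · subst h; exact hstable r a ha b hb hab
  · exact key r' r h b hb a ha hab.symm
end

section
/- Soundness of valid transitions in the set cover decision diagram: let E be a finite type, m : ℕ, s : Fin (m+1) → Finset E with s 0 = Finset.univ and s m = ∅, and let 𝐼₁, …, 𝐼ₘ be finite families of finsets of E such that s (r−1) \ (⋃_{B ∈ 𝐼_r} B) ⊆ s r for every 1 ≤ r ≤ m. Then ⋃_{r=1}^{m} ⋃_{B ∈ 𝐼_r} B = Finset.univ; that is, the sets selected along the transitions form a cover of E. -/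
open Finset

/-- Soundness of valid transitions in the set cover decision diagram:
if the states go from `univ` (nothing covered) to `∅` (everything covered) and each
transition is valid (`s (r-1) \ ⋃_{B ∈ 𝓘 r} B ⊆ s r`), then the sets selected along the
transitions form a cover of `E`. -/
theorem set_cover_valid_transitions_sound {E : Type*} [Fintype E] [DecidableEq E]
    (m : ℕ) (s : Fin (m + 1) → Finset E)
    (h0 : s 0 = Finset.univ) (hlast : s (Fin.last m) = ∅)
    (𝓘 : Fin m → Finset (Finset E))
    (hvalid : ∀ r : Fin m, s r.castSucc \ (𝓘 r).biUnion id ⊆ s r.succ) :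
    Finset.univ.biUnion (fun r : Fin m => (𝓘 r).biUnion id) = Finset.univ := by
  apply Finset.eq_univ_of_forall
  intro x
  by_contra hx
  simp only [Finset.mem_biUnion, Finset.mem_univ, true_and, not_exists] at hx
  have key : ∀ r : Fin (m + 1), x ∈ s r := by
    intro r
    induction r using Fin.induction with
    | zero => simp [h0]
    | succ i ih =>
      apply hvalid i
      rw [Finset.mem_sdiff]
      refine ⟨ih, ?_⟩
      simp only [Finset.mem_biUnion, not_exists, id]
      intro B hB
      exact hx i B hB
  have := key (Fin.last m)
  rw [hlast] at this
  exact absurd this (Finset.notMem_empty x)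
end

section
/- Upper bound on the leader's revenue in the CPP: assume there exists S₀ ∈ 𝒳 with S₀ ⊆ I₂. Then for every feasible toll t and every S ∈ R(t), Σ_{i∈S} t i ≤ (max_{S'∈𝒳} Σ_{i∈S'} v i) − (max over S' ∈ 𝒳 with S' ⊆ I₂ of Σ_{i∈S'} v i); that is, the optimistic revenue never exceeds f(0) − f(∞), the null-toll follower value minus the toll-free follower value. -/
open Finset

/-- Upper bound on the leader's revenue in the CPP: if some feasible
follower solution uses only toll-free items, then for every feasible toll and every
follower-optimal response the leader's revenue is at most the null-toll follower value
minus the toll-free follower value, `f(0) - f(∞)`. -/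
theorem cpp_revenue_upper_bound {ι : Type*} [Fintype ι] [DecidableEq ι]
    (I₁ I₂ : Finset ι) (hpart : I₁ ∪ I₂ = Finset.univ) (hdisj : Disjoint I₁ I₂)
    (v : ι → ℝ) (𝒳 : Finset (Finset ι)) (h𝒳 : 𝒳.Nonempty)
    (h₀ : (𝒳.filter (fun S => S ⊆ I₂)).Nonempty)
    (t : ι → ℝ) (ht₁ : ∀ i ∈ I₁, 0 ≤ t i) (ht₂ : ∀ i ∈ I₂, t i = 0)
    (S : Finset ι) (hS : S ∈ 𝒳)
    (hopt : ∀ S' ∈ 𝒳, ∑ i ∈ S', (v i - t i) ≤ ∑ i ∈ S, (v i - t i)) :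
    ∑ i ∈ S, t i ≤
      𝒳.sup' h𝒳 (fun S' => ∑ i ∈ S', v i) -
        (𝒳.filter (fun S' => S' ⊆ I₂)).sup' h₀ (fun S' => ∑ i ∈ S', v i) := by
  obtain ⟨S₀, hS₀, hEq⟩ := Finset.exists_mem_eq_sup' h₀ (fun S' => ∑ i ∈ S', v i)
  obtain ⟨hS₀X, hS₀I₂⟩ := Finset.mem_filter.mp hS₀
  have h1 : ∑ i ∈ S₀, (v i - t i) = ∑ i ∈ S₀, v i := by
    apply Finset.sum_congr rfl
    intro i hi
    rw [ht₂ i (hS₀I₂ hi)]; ring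
  have h2 : ∑ i ∈ S₀, (v i - t i) ≤ ∑ i ∈ S, (v i - t i) := hopt S₀ hS₀X
  have h3 : ∑ i ∈ S, v i ≤ 𝒳.sup' h𝒳 (fun S' => ∑ i ∈ S', v i) :=
    Finset.le_sup' (fun S' => ∑ i ∈ S', v i) hS
  have h4 : ∑ i ∈ S, t i = ∑ i ∈ S, v i - ∑ i ∈ S, (v i - t i) := by
    rw [Finset.sum_sub_distrib]; ring
  rw [h4, hEq]
  linarith
end

section
/- Unboundedness of the minimum set cover pricing problem when the toll-free items do not cover: in the MinSCPP setup, assume 𝒳 is nonempty and that no S ⊆ I₂ is a cover (i.e., for every S ⊆ I₂, ⋃_{j∈S} A j ≠ E). Then for every M ≥ 0 there exists a feasible toll t such that every S ∈ R(t) satisfies Σ_{j∈S} t j ≥ M; consequently the supremum of the leader's revenue Σ_{j∈S} t j over feasible t and S ∈ R(t) is +∞. -/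
open Finset

/-!
Charge the same toll `M` on every item outside `I₂`. Toll-free items alone never cover `E`, so
every cover contains a tolled item and pays at least `M`; this applies in particular to a
follower-optimal cover, which exists because there are only finitely many covers.
-/

section

variable {E ι : Type*}

noncomputable def outsideToll (I₂ : Finset ι) (M : ℝ) : ι → ℝ :=
  (↑I₂ : Set ι)ᶜ.indicator fun _ => M

theorem outsideToll_nonneg {I₂ : Finset ι} {M : ℝ} (hM : 0 ≤ M) (j : ι) :
    0 ≤ outsideToll I₂ M j :=
  Set.indicator_nonneg (fun _ _ => hM) j

theorem outsideToll_of_mem {I₂ : Finset ι} {j : ι} (hj : j ∈ I₂) (M : ℝ) :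
    outsideToll I₂ M j = 0 :=
  Set.indicator_of_notMem (Set.notMem_compl_iff.mpr hj) _

theorem outsideToll_of_notMem {I₂ : Finset ι} {j : ι} (hj : j ∉ I₂) (M : ℝ) :
    outsideToll I₂ M j = M :=
  Set.indicator_of_mem (Set.mem_compl hj) _

theorem le_sum_outsideToll {I₂ S : Finset ι} {M : ℝ} (hM : 0 ≤ M) {j : ι} (hjS : j ∈ S)
    (hj : j ∉ I₂) : M ≤ ∑ i ∈ S, outsideToll I₂ M i :=
  calc M = outsideToll I₂ M j := (outsideToll_of_notMem hj M).symm
    _ ≤ ∑ i ∈ S, outsideToll I₂ M i :=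
      single_le_sum (fun i _ => outsideToll_nonneg hM i) hjS

theorem exists_mem_notMem_of_biUnion_eq_univ [Fintype E] [DecidableEq E]
    {I₂ S : Finset ι} {A : ι → Finset E}
    (hnofree : ∀ S : Finset ι, S ⊆ I₂ → S.biUnion A ≠ univ) (hS : S.biUnion A = univ) :
    ∃ j ∈ S, j ∉ I₂ := by
  by_contra! h
  exact hnofree S h hS

theorem le_sum_outsideToll_of_biUnion_eq_univ [Fintype E] [DecidableEq E]
    {I₂ S : Finset ι} {A : ι → Finset E}
    (hnofree : ∀ S : Finset ι, S ⊆ I₂ → S.biUnion A ≠ univ) (hS : S.biUnion A = univ)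
    {M : ℝ} (hM : 0 ≤ M) : M ≤ ∑ j ∈ S, outsideToll I₂ M j := by
  obtain ⟨j, hjS, hj⟩ := exists_mem_notMem_of_biUnion_eq_univ hnofree hS
  exact le_sum_outsideToll hM hjS hj

end

theorem minscpp_unbounded_without_tollfree_cover_general {E ι : Type*}
    [Fintype E] [DecidableEq E] [Fintype ι]
    (I₁ I₂ : Finset ι)
    (A : ι → Finset E) (v : ι → ℝ)
    (hcover : ∃ S : Finset ι, S.biUnion A = Finset.univ)
    (hnofree : ∀ S : Finset ι, S ⊆ I₂ → S.biUnion A ≠ Finset.univ) :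
    (∀ M : ℝ, 0 ≤ M → ∃ t : ι → ℝ, (∀ j ∈ I₁, 0 ≤ t j) ∧ (∀ j ∈ I₂, t j = 0) ∧
      ∀ S : Finset ι, S.biUnion A = Finset.univ →
        (∀ S' : Finset ι, S'.biUnion A = Finset.univ →
          ∑ j ∈ S, (v j + t j) ≤ ∑ j ∈ S', (v j + t j)) →
        M ≤ ∑ j ∈ S, t j) ∧
    ¬ BddAbove {r : ℝ | ∃ t : ι → ℝ, (∀ j ∈ I₁, 0 ≤ t j) ∧ (∀ j ∈ I₂, t j = 0) ∧
      ∃ S : Finset ι, S.biUnion A = Finset.univ ∧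
        (∀ S' : Finset ι, S'.biUnion A = Finset.univ →
          ∑ j ∈ S, (v j + t j) ≤ ∑ j ∈ S', (v j + t j)) ∧
        r = ∑ j ∈ S, t j} := by
  refine ⟨fun M hM => ⟨outsideToll I₂ M, fun j _ => outsideToll_nonneg hM j,
    fun j hj => outsideToll_of_mem hj M,
    fun S hS _ => le_sum_outsideToll_of_biUnion_eq_univ hnofree hS hM⟩, ?_⟩
  rw [not_bddAbove_iff]
  intro b
  set t := outsideToll I₂ (max b 0 + 1)
  obtain ⟨S, hS, hopt⟩ := Set.exists_min_image {S : Finset ι | S.biUnion A = univ}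
    (fun S => ∑ j ∈ S, (v j + t j)) (Set.toFinite _) hcover
  refine ⟨_, ⟨t, fun j _ => outsideToll_nonneg (by positivity) j,
    fun j hj => outsideToll_of_mem hj _, S, hS, hopt, rfl⟩, ?_⟩
  calc b < max b 0 + 1 := by linarith [le_max_left b 0]
    _ ≤ ∑ j ∈ S, t j := le_sum_outsideToll_of_biUnion_eq_univ hnofree hS (by positivity)

/-- Unboundedness of the minimum set cover pricing problem when the
toll-free items do not cover: for every `M ≥ 0` there is a feasible toll forcing every
follower-optimal cover to yield revenue at least `M`; consequently the set of achievable
leader revenues is unbounded above (its supremum is `+∞`). -/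
theorem minscpp_unbounded_without_tollfree_cover {E ι : Type*}
    [Fintype E] [DecidableEq E] [Fintype ι] [DecidableEq ι]
    (I₁ I₂ : Finset ι) (hpart : I₁ ∪ I₂ = Finset.univ) (hdisj : Disjoint I₁ I₂)
    (A : ι → Finset E) (v : ι → ℝ)
    (hcover : ∃ S : Finset ι, S.biUnion A = Finset.univ)
    (hnofree : ∀ S : Finset ι, S ⊆ I₂ → S.biUnion A ≠ Finset.univ) :
    (∀ M : ℝ, 0 ≤ M → ∃ t : ι → ℝ, (∀ j ∈ I₁, 0 ≤ t j) ∧ (∀ j ∈ I₂, t j = 0) ∧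
      ∀ S : Finset ι, S.biUnion A = Finset.univ →
        (∀ S' : Finset ι, S'.biUnion A = Finset.univ →
          ∑ j ∈ S, (v j + t j) ≤ ∑ j ∈ S', (v j + t j)) →
        M ≤ ∑ j ∈ S, t j) ∧
    ¬ BddAbove {r : ℝ | ∃ t : ι → ℝ, (∀ j ∈ I₁, 0 ≤ t j) ∧ (∀ j ∈ I₂, t j = 0) ∧
      ∃ S : Finset ι, S.biUnion A = Finset.univ ∧
        (∀ S' : Finset ι, S'.biUnion A = Finset.univ →
          ∑ j ∈ S, (v j + t j) ≤ ∑ j ∈ S', (v j + t j)) ∧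
        r = ∑ j ∈ S, t j} :=
  minscpp_unbounded_without_tollfree_cover_general I₁ I₂ A v hcover hnofree
end

section
/- Validity of the toll bound P in the MinSCPP: in the MinSCPP setup with v k ≥ 0 for all k, fix a tolled item j ∈ I₁ and a feasible toll t. If there exists S₀ ⊆ I₂ with A j ⊆ ⋃_{k∈S₀} A k and Σ_{k∈S₀} v k < v j + t j, then every S ∈ R(t) satisfies j ∉ S; that is, when the toll on item j exceeds the toll-free cost of covering A j minus v j, no follower-optimal cover contains j. -/
open Finset

/-- Validity of the toll bound `P` in the MinSCPP: if some toll-free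
family `S₀ ⊆ I₂` covers `A j` at total base cost strictly less than `v j + t j`, then no
follower-optimal cover contains the tolled item `j`. -/
theorem minscpp_toll_bound_P_valid {E ι : Type*}
    [Fintype E] [DecidableEq E] [Fintype ι] [DecidableEq ι]
    (I₁ I₂ : Finset ι) (hpart : I₁ ∪ I₂ = Finset.univ) (hdisj : Disjoint I₁ I₂)
    (A : ι → Finset E) (v : ι → ℝ) (hv : ∀ k, 0 ≤ v k)
    (j : ι) (hj : j ∈ I₁)
    (t : ι → ℝ) (ht₁ : ∀ k ∈ I₁, 0 ≤ t k) (ht₂ : ∀ k ∈ I₂, t k = 0)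
    (S₀ : Finset ι) (hS₀ : S₀ ⊆ I₂) (hS₀cov : A j ⊆ S₀.biUnion A)
    (hS₀cost : ∑ k ∈ S₀, v k < v j + t j) :
    ∀ S : Finset ι, S.biUnion A = Finset.univ →
      (∀ S' : Finset ι, S'.biUnion A = Finset.univ →
        ∑ k ∈ S, (v k + t k) ≤ ∑ k ∈ S', (v k + t k)) →
      j ∉ S := by
  intro S hcov hopt hjS
  have hnn : ∀ k, 0 ≤ v k + t k := by
    intro k
    have : k ∈ I₁ ∪ I₂ := by rw [hpart]; exact mem_univ k
    rcases mem_union.mp this with h | h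
    · exact add_nonneg (hv k) (ht₁ k h)
    · rw [ht₂ k h, add_zero]; exact hv k
  set S' : Finset ι := (S.erase j) ∪ S₀ with hS'
  have hcov' : S'.biUnion A = Finset.univ := by
    apply Finset.eq_univ_of_forall
    intro e
    have he : e ∈ S.biUnion A := by rw [hcov]; exact mem_univ e
    rcases mem_biUnion.mp he with ⟨k, hkS, hek⟩
    by_cases hkj : k = j
    · subst hkj
      rcases mem_biUnion.mp (hS₀cov hek) with ⟨m, hm, hem⟩
      exact mem_biUnion.mpr ⟨m, mem_union_right _ hm, hem⟩
    · exact mem_biUnion.mpr ⟨k, mem_union_left _ (mem_erase.mpr ⟨hkj, hkS⟩), hek⟩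
  have hle := hopt S' hcov'
  have h1 : ∑ k ∈ S', (v k + t k) ≤ ∑ k ∈ S.erase j, (v k + t k) + ∑ k ∈ S₀, (v k + t k) := by
    have hkey := Finset.sum_union_inter (s₁ := S.erase j) (s₂ := S₀) (f := fun k => v k + t k)
    have hnn2 : 0 ≤ ∑ k ∈ (S.erase j) ∩ S₀, (v k + t k) :=
      Finset.sum_nonneg fun k _ => hnn k
    rw [hS']; linarith
  have h2 : ∑ k ∈ S₀, (v k + t k) = ∑ k ∈ S₀, v k := by
    apply Finset.sum_congr rfl
    intro k hk
    rw [ht₂ k (hS₀ hk), add_zero]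
  have h3 : ∑ k ∈ S.erase j, (v k + t k) + (v j + t j) = ∑ k ∈ S, (v k + t k) :=
    Finset.sum_erase_add S _ hjS
  linarith
end

section
/- Validity of the toll bound Q in the MinSCPP: in the MinSCPP setup with v k ≥ 0 for all k, fix a tolled item j ∈ I₁ and a feasible toll t. Let F∞ be the minimum of Σ_{k∈S} v k over S ⊆ I₂ with ⋃_{k∈S} A k = E (assumed to exist), and let F₀ be the minimum of Σ_{k∈S} v k over S ⊆ ι \ {j} with E \ A j ⊆ ⋃_{k∈S} A k. If v j + t j + F₀ > F∞, then every S ∈ R(t) satisfies j ∉ S; that is, when the toll on item j exceeds the toll-free cost of covering E minus the null-toll cost of covering E \ A j minus v j, no follower-optimal cover contains j. -/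
open Finset

/-- Validity of the toll bound `Q` in the MinSCPP: let `F∞` be the
minimum toll-free cost of covering `E` and `F₀` the minimum null-toll cost of covering
`E \ A j` without using item `j`. If `v j + t j + F₀ > F∞`, then no follower-optimal
cover contains the tolled item `j`. -/
theorem minscpp_toll_bound_Q_valid {E ι : Type*}
    [Fintype E] [DecidableEq E] [Fintype ι] [DecidableEq ι]
    (I₁ I₂ : Finset ι) (hpart : I₁ ∪ I₂ = Finset.univ) (hdisj : Disjoint I₁ I₂)
    (A : ι → Finset E) (v : ι → ℝ) (hv : ∀ k, 0 ≤ v k)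
    (j : ι) (hj : j ∈ I₁)
    (t : ι → ℝ) (ht₁ : ∀ k ∈ I₁, 0 ≤ t k) (ht₂ : ∀ k ∈ I₂, t k = 0)
    (Finfty F₀ : ℝ)
    (hFinfty : IsLeast {r : ℝ | ∃ S : Finset ι, S ⊆ I₂ ∧
      S.biUnion A = Finset.univ ∧ r = ∑ k ∈ S, v k} Finfty)
    (hF₀ : IsLeast {r : ℝ | ∃ S : Finset ι, S ⊆ Finset.univ \ {j} ∧
      Finset.univ \ A j ⊆ S.biUnion A ∧ r = ∑ k ∈ S, v k} F₀)
    (hQ : v j + t j + F₀ > Finfty) :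
    ∀ S : Finset ι, S.biUnion A = Finset.univ →
      (∀ S' : Finset ι, S'.biUnion A = Finset.univ →
        ∑ k ∈ S, (v k + t k) ≤ ∑ k ∈ S', (v k + t k)) →
      j ∉ S := by
  intro S hScov hSopt hjS
  -- nonnegativity of tolls everywhere
  have htnn : ∀ k, 0 ≤ t k := by
    intro k
    have : k ∈ I₁ ∪ I₂ := by rw [hpart]; exact mem_univ k
    rcases mem_union.mp this with h | h
    · exact ht₁ k h
    · rw [ht₂ k h]
  -- toll-free cover achieving Finfty
  obtain ⟨⟨Sinf, hSinfI₂, hSinfcov, hSinfsum⟩, _⟩ := hFinfty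
  have hSinft : ∑ k ∈ Sinf, (v k + t k) = Finfty := by
    rw [hSinfsum]
    exact Finset.sum_congr rfl fun k hk => by rw [ht₂ k (hSinfI₂ hk), add_zero]
  -- S \ {j} covers univ \ A j and avoids j
  have hF₀le : F₀ ≤ ∑ k ∈ S \ {j}, v k := by
    apply hF₀.2
    refine ⟨S \ {j}, ?_, ?_, rfl⟩
    · intro k hk
      simp only [mem_sdiff, mem_singleton] at hk ⊢
      exact ⟨mem_univ k, hk.2⟩
    · intro e he
      simp only [mem_sdiff] at he
      have : e ∈ S.biUnion A := by rw [hScov]; exact mem_univ e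
      obtain ⟨k, hkS, hek⟩ := mem_biUnion.mp this
      refine mem_biUnion.mpr ⟨k, ?_, hek⟩
      refine mem_sdiff.mpr ⟨hkS, ?_⟩
      simp only [mem_singleton]
      rintro rfl
      exact he.2 hek
  have hcost : v j + t j + F₀ ≤ ∑ k ∈ S, (v k + t k) := by
    have hsplit : ∑ k ∈ S, (v k + t k) = (v j + t j) + ∑ k ∈ S \ {j}, (v k + t k) := by
      have := Finset.sum_sdiff_eq_sub (f := fun k => v k + t k)
        (Finset.singleton_subset_iff.mpr hjS)
      rw [Finset.sum_singleton] at this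
      linarith
    rw [hsplit]
    have h1 : ∑ k ∈ S \ {j}, v k ≤ ∑ k ∈ S \ {j}, (v k + t k) :=
      Finset.sum_le_sum fun k _ => le_add_of_nonneg_right (htnn k)
    linarith
  have := hSopt Sinf hSinfcov
  rw [hSinft] at this
  linarith
end

section
/- For the maximum stable set pricing problem, the leader may be assumed to set t i ≤ v i on tolled items: if G is a simple graph on the finite item set ι, 𝒳 is the family of stable sets of G, and v i ≥ 0 for all i ∈ I₁, then the optimistic CPP value sup over feasible tolls t and S ∈ R(t) of Σ_{i∈S} t i equals the supremum of the same quantity taken only over feasible tolls t that additionally satisfy t i ≤ v i for all i ∈ I₁. -/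
open Finset

/-- For the maximum stable set pricing problem (follower's feasible
solutions are the stable sets of a simple graph `G`, with `v i ≥ 0` on tolled items),
the optimistic CPP value is unchanged if the leader is additionally restricted to tolls
satisfying `t i ≤ v i` on tolled items. -/
theorem maxsspp_toll_bounded_by_value {ι : Type*} [Fintype ι] [DecidableEq ι]
    (G : SimpleGraph ι) [DecidableRel G.Adj]
    (I₁ I₂ : Finset ι) (hpart : I₁ ∪ I₂ = Finset.univ) (hdisj : Disjoint I₁ I₂)
    (v : ι → ℝ) (hv : ∀ i ∈ I₁, 0 ≤ v i) :
    sSup {r : ℝ | ∃ t : ι → ℝ, (∀ i ∈ I₁, 0 ≤ t i) ∧ (∀ i ∈ I₂, t i = 0) ∧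
      ∃ S : Finset ι, (∀ a ∈ S, ∀ b ∈ S, ¬ G.Adj a b) ∧
        (∀ S' : Finset ι, (∀ a ∈ S', ∀ b ∈ S', ¬ G.Adj a b) →
          ∑ i ∈ S', (v i - t i) ≤ ∑ i ∈ S, (v i - t i)) ∧
        r = ∑ i ∈ S, t i} =
    sSup {r : ℝ | ∃ t : ι → ℝ, (∀ i ∈ I₁, 0 ≤ t i) ∧ (∀ i ∈ I₂, t i = 0) ∧
      (∀ i ∈ I₁, t i ≤ v i) ∧
      ∃ S : Finset ι, (∀ a ∈ S, ∀ b ∈ S, ¬ G.Adj a b) ∧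
        (∀ S' : Finset ι, (∀ a ∈ S', ∀ b ∈ S', ¬ G.Adj a b) →
          ∑ i ∈ S', (v i - t i) ≤ ∑ i ∈ S, (v i - t i)) ∧
        r = ∑ i ∈ S, t i} := by
  congr 1
  ext r
  constructor
  · rintro ⟨t, ht0, ht2, S, hstab, hopt, hr⟩
    -- tolls on S are already bounded by v
    have hI1 : ∀ i : ι, i ∉ I₂ → i ∈ I₁ := by
      intro i hi
      have : i ∈ I₁ ∪ I₂ := by rw [hpart]; exact mem_univ i
      rcases mem_union.mp this with h | h
      · exact h
      · exact absurd h hi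
    have hts : ∀ i ∈ S, t i ≤ v i := by
      intro i hi
      have hst : ∀ a ∈ S.erase i, ∀ b ∈ S.erase i, ¬ G.Adj a b :=
        fun a ha b hb => hstab a (mem_of_mem_erase ha) b (mem_of_mem_erase hb)
      have h1 := hopt _ hst
      have h2 : ∑ j ∈ S.erase i, (v j - t j) + (v i - t i) = ∑ j ∈ S, (v j - t j) :=
        Finset.sum_erase_add _ _ hi
      linarith
    set t' : ι → ℝ := fun i => if i ∈ S then t i else if i ∈ I₁ then v i else 0 with ht'
    have ht'S : ∀ i ∈ S, t' i = t i := by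
      intro i hi; simp [ht', hi]
    have hsumS : ∑ i ∈ S, (v i - t' i) = ∑ i ∈ S, (v i - t i) :=
      Finset.sum_congr rfl (fun i hi => by rw [ht'S i hi])
    refine ⟨t', ?_, ?_, ?_, S, hstab, ?_, ?_⟩
    · intro i hi
      by_cases h : i ∈ S
      · simpa [ht', h] using ht0 i hi
      · simp [ht', h, hi]; exact hv i hi
    · intro i hi
      by_cases h : i ∈ S
      · simpa [ht', h] using ht2 i hi
      · have : i ∉ I₁ := fun hI => (Finset.disjoint_left.mp hdisj) hI hi
        simp [ht', h, this]
    · intro i hi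
      by_cases h : i ∈ S
      · simpa [ht', h] using hts i h
      · simp [ht', h, hi]
    · intro S' hst'
      classical
      set S'' := S'.filter (fun i => i ∈ S ∨ i ∈ I₂) with hS''
      have hsplit : ∑ i ∈ S', (v i - t' i) =
          ∑ i ∈ S'', (v i - t' i) +
          ∑ i ∈ S'.filter (fun i => ¬ (i ∈ S ∨ i ∈ I₂)), (v i - t' i) :=
        (Finset.sum_filter_add_sum_filter_not S' _ _).symm
      have hzero : ∑ i ∈ S'.filter (fun i => ¬ (i ∈ S ∨ i ∈ I₂)), (v i - t' i) = 0 := by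
        apply Finset.sum_eq_zero
        intro i hi
        rw [Finset.mem_filter] at hi
        push_neg at hi
        obtain ⟨_, hiS, hiI2⟩ := hi
        have h1 : i ∈ I₁ := hI1 i hiI2
        simp [ht', hiS, h1]
      have hS''t : ∑ i ∈ S'', (v i - t' i) = ∑ i ∈ S'', (v i - t i) := by
        apply Finset.sum_congr rfl
        intro i hi
        rw [hS'', Finset.mem_filter] at hi
        rcases hi.2 with h | h
        · rw [ht'S i h]
        · by_cases hs : i ∈ S
          · rw [ht'S i hs]
          · have : i ∉ I₁ := fun hI => (Finset.disjoint_left.mp hdisj) hI h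
            simp [ht', hs, this, ht2 i h]
      have hS''stab : ∀ a ∈ S'', ∀ b ∈ S'', ¬ G.Adj a b := by
        intro a ha b hb
        exact hst' a (Finset.mem_of_mem_filter a ha) b (Finset.mem_of_mem_filter b hb)
      have := hopt S'' hS''stab
      rw [hsplit, hzero, hS''t, hsumS]
      linarith
    · rw [hr]
      exact Finset.sum_congr rfl (fun i hi => (ht'S i hi).symm)
  · rintro ⟨t, ht0, ht2, _, S, hstab, hopt, hr⟩
    exact ⟨t, ht0, ht2, S, hstab, hopt, hr⟩
end
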